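/- arXiv:1704.05286 — 3 statements merged into one kernel-verified Lean document; each statement's English description precedes it below -/
import Mathlib

section
/- Let K ⊆ V(G) be a cliquish vertex set and let S be a proper subset of K. Then crib(S, K) is the unique component associated with S that intersects K. -/
namespace TW

variable {V : Type} [Finite V]

/-- The open neighborhood of a vertex set `U`: vertices outside `U`
adjacent to some vertex of `U`. -/
def nbhd (G : SimpleGraph V) (U : Set V) : Set V :=
  {v | v ∉ U ∧ ∃ u ∈ U, G.Adj u v}

/-- The closed neighborhood `N[U] = U ∪ N(U)`. -/
def nbhdClosed (G : SimpleGraph V) (U : Set V) : Set V :=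
  U ∪ nbhd G U

/-- A set `C` is connected in `G` if the induced subgraph `G[C]` is connected. -/
def SetConnected (G : SimpleGraph V) (C : Set V) : Prop :=
  (G.induce C).Connected

/-- `C` is a component associated with `S`: a connected component of the
subgraph of `G` induced by the complement of `S`. -/
def IsCompAssoc (G : SimpleGraph V) (S C : Set V) : Prop :=
  SetConnected G C ∧ Disjoint C S ∧ nbhd G C ⊆ S

/-- `C` is a full component associated with `S`. -/
def IsFullComp (G : SimpleGraph V) (S C : Set V) : Prop :=
  IsCompAssoc G S C ∧ nbhd G C = S

/-- `S` is a minimal separator: at least two full components are associated with `S`. -/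
def MinimalSeparator (G : SimpleGraph V) (S : Set V) : Prop :=
  ∃ C D : Set V, IsFullComp G S C ∧ IsFullComp G S D ∧ C ≠ D

/-- The number of connected components of the subgraph induced by the complement of `S`. -/
noncomputable def numComponents (G : SimpleGraph V) (S : Set V) : ℕ :=
  Nat.card (G.induce (Sᶜ : Set V)).ConnectedComponent

/-- `S` is a separator of `G`: removing `S` increases the number of connected
components of `G`. -/
def Separator (G : SimpleGraph V) (S : Set V) : Prop :=
  numComponents G (∅ : Set V) < numComponents G S

/-- `S` is cliquish: every two distinct vertices of `S` are adjacent or lie in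
the neighborhood of a common component associated with `S`. -/
def Cliquish (G : SimpleGraph V) (S : Set V) : Prop :=
  ∀ u ∈ S, ∀ v ∈ S, u ≠ v →
    G.Adj u v ∨ ∃ C, IsCompAssoc G S C ∧ u ∈ nbhd G C ∧ v ∈ nbhd G C

/-- A graph is chordal if every induced cycle has length exactly three. -/
def IsChordal {W : Type} (H : SimpleGraph W) : Prop :=
  ∀ ⦃v : W⦄ (w : H.Walk v v), w.IsCycle →
    (∀ x ∈ w.support, ∀ y ∈ w.support, H.Adj x y → s(x, y) ∈ w.edges) →
    w.length = 3

/-- `H` is a minimal chordal completion of `G`. -/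
def MinChordalCompletion {W : Type} (G H : SimpleGraph W) : Prop :=
  G ≤ H ∧ IsChordal H ∧ ∀ H' : SimpleGraph W, G ≤ H' → H' ≤ H → IsChordal H' → H' = H

/-- `Ω` is a potential maximal clique of `G`: a clique in some minimal chordal
completion of `G`. -/
def PMC {W : Type} (G : SimpleGraph W) (Ω : Set W) : Prop :=
  ∃ H : SimpleGraph W, MinChordalCompletion G H ∧ H.IsClique Ω

/-- A tree-decomposition of `G`. -/
structure TreeDecomp {W : Type} (G : SimpleGraph W) where
  ι : Type
  tree : SimpleGraph ι
  isTree : tree.IsTree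
  bag : ι → Set W
  bag_cover : ∀ v : W, ∃ i, v ∈ bag i
  bag_edge : ∀ ⦃u v : W⦄, G.Adj u v → ∃ i, u ∈ bag i ∧ v ∈ bag i
  bag_conn : ∀ v : W, (tree.induce {i | v ∈ bag i}).Connected

/-- The width of a tree-decomposition: maximum bag size minus one. -/
noncomputable def TreeDecomp.width {W : Type} {G : SimpleGraph W} (td : TreeDecomp G) : ℕ :=
  (⨆ i, (td.bag i).ncard) - 1

/-- The treewidth of `G`: the minimum width over all tree-decompositions. -/
noncomputable def treewidth {W : Type} (G : SimpleGraph W) : ℕ :=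
  ⨅ td : TreeDecomp G, td.width

/-- The graph on `V` whose edges are all pairs of distinct vertices of `S`. -/
def cliqueOn {W : Type} (S : Set W) : SimpleGraph W where
  Adj u v := u ≠ v ∧ u ∈ S ∧ v ∈ S
  symm := ⟨fun u v ⟨h, hu, hv⟩ => ⟨h.symm, hv, hu⟩⟩
  loopless := ⟨fun u ⟨h, _, _⟩ => h rfl⟩

/-- `G⟨C⟩`: the graph on `N[C]` obtained from `G[N[C]]` by completing `N(C)` into a clique. -/
def gAngle (G : SimpleGraph V) (C : Set V) : SimpleGraph ↥(nbhdClosed G C) :=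
  (G ⊔ cliqueOn (nbhd G C)).induce (nbhdClosed G C)

/-- A connected set `C` is feasible if `tw(G⟨C⟩) ≤ k`. -/
def Feasible (G : SimpleGraph V) (k : ℕ) (C : Set V) : Prop :=
  treewidth (gAngle G C) ≤ k

/-- `crib S K`: the union of `K \ S` and all components associated with `K`
that are unconfined to `S` (i.e. whose neighborhood is not contained in `S`). -/
def crib (G : SimpleGraph V) (S K : Set V) : Set V :=
  (K \ S) ∪ ⋃ C ∈ {C : Set V | IsCompAssoc G K C ∧ ¬ nbhd G C ⊆ S}, C

section Order

variable [LinearOrder V]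

/-- The minimum element of a nonempty subset of a finite linear order. -/
noncomputable def setMin (U : Set V) (hU : U.Nonempty) : V :=
  wellFounded_lt.min U hU

/-- `U ≺ W`: `min U < min W` (for nonempty sets `U`, `W`). -/
def SetPrec (U W : Set V) : Prop :=
  ∃ (hU : U.Nonempty) (hW : W.Nonempty), setMin U hU < setMin W hW

/-- A connected set `C` is inbound if some full component `A` associated with
`N(C)` satisfies `A ≺ C`. -/
def Inbound (G : SimpleGraph V) (C : Set V) : Prop :=
  SetConnected G C ∧ ∃ A, IsFullComp G (nbhd G C) A ∧ SetPrec A C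

/-- A connected set is outbound if it is not inbound. -/
def Outbound (G : SimpleGraph V) (C : Set V) : Prop :=
  SetConnected G C ∧ ¬ ∃ A, IsFullComp G (nbhd G C) A ∧ SetPrec A C

open Classical in
/-- The outlet of `K`: `∅` if no non-full outbound component is associated with `K`;
otherwise `N(A)` for a non-full outbound component `A` associated with `K`
with `N(A)` maximal. -/
noncomputable def outlet (G : SimpleGraph V) (K : Set V) : Set V :=
  if h : ∃ A, IsCompAssoc G K A ∧ nbhd G A ≠ K ∧ Outbound G A ∧
      ∀ A', IsCompAssoc G K A' → nbhd G A' ≠ K → Outbound G A' →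
        ¬ nbhd G A ⊂ nbhd G A'
  then nbhd G h.choose
  else ∅

/-- `support K`: the components associated with `K` that are unconfined to `outlet K`. -/
def support (G : SimpleGraph V) (K : Set V) : Set (Set V) :=
  {C | IsCompAssoc G K C ∧ ¬ nbhd G C ⊆ outlet G K}

/-- An O-block `(N(A), A)` (with `A` outbound and `|N(A)| ≤ k`) is feasible if
`N(A) = ⋃_{C ∈ 𝒞} N(C)` for some set `𝒞` of feasible inbound connected sets. -/
def FeasibleOBlock (G : SimpleGraph V) (k : ℕ) (A : Set V) : Prop :=
  Outbound G A ∧ (nbhd G A).ncard ≤ k ∧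
    ∃ 𝒞 : Set (Set V), (∀ C ∈ 𝒞, Inbound G C ∧ Feasible G k C) ∧
      nbhd G A = ⋃ C ∈ 𝒞, nbhd G C

/-- A potential maximal clique `Ω` is buildable. -/
def Buildable (G : SimpleGraph V) (k : ℕ) (Ω : Set V) : Prop :=
  Ω.ncard ≤ k + 1 ∧
    ((∃ v : V, Ω = nbhdClosed G {v}) ∨
     (∃ 𝒞 ⊆ support G Ω, (∀ C ∈ 𝒞, Feasible G k C) ∧ Ω = ⋃ C ∈ 𝒞, nbhd G C) ∨
     (∃ A, FeasibleOBlock G k A ∧ ∃ v ∈ nbhd G A, Ω = nbhd G A ∪ (G.neighborSet v ∩ A)))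

end Order

end TW

/-!
Write `T` for `crib S K`. Every vertex of `T` outside `K` lies in a component of `G - K` with a
neighbor in `K \ S`, and two vertices of `K \ S` are adjacent or, `K` being cliquish, neighbors of
one component of `G - K`, which then lies in `T`; so `T` is connected. A neighbor of `T` outside `S`
would lie in `K \ S` or in a component of `G - K` that `T` already contains, so `N(T) ⊆ S` and `T`
is a component associated with `S`. It contains `K \ S`, which every component associated with `S`
and meeting `K` also meets, and components associated with `S` that share a vertex coincide.
-/

namespace SimpleGraph

variable {W : Type} {G : SimpleGraph W} {A T : Set W}

lemma reachable_induce_of_subset (hA : (G.induce A).Preconnected) (hAT : A ⊆ T) {x y : W}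
    (hx : x ∈ A) (hy : y ∈ A) : (G.induce T).Reachable ⟨x, hAT hx⟩ ⟨y, hAT hy⟩ :=
  (hA ⟨x, hx⟩ ⟨y, hy⟩).map (G.induceHomOfLE hAT).toHom

lemma connected_induce_singleton (v : W) : (G.induce {v}).Connected :=
  (connected_iff _).2 ⟨.of_subsingleton, ⟨⟨v, rfl⟩⟩⟩

end SimpleGraph

namespace TW

section Components

variable {V : Type} {G : SimpleGraph V} {S C D : Set V} {x y : V}

lemma IsCompAssoc.mem_of_adj (hC : IsCompAssoc G S C) (hx : x ∈ C) (hxy : G.Adj x y)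
    (hy : y ∉ S) : y ∈ C := by
  by_contra hyC
  exact hy (hC.2.2 ⟨hyC, x, hx, hxy⟩)

lemma IsCompAssoc.subset_of_setConnected (hC : IsCompAssoc G S C) (hD : SetConnected G D)
    (hDS : Disjoint D S) (hxC : x ∈ C) (hxD : x ∈ D) : D ⊆ C := by
  have walk_mem : ∀ {a b : D}, (G.induce D).Walk a b → (a : V) ∈ C → (b : V) ∈ C := by
    intro a b p
    induction p with
    | nil => exact id
    | cons hadj _ ih =>
      exact fun ha => ih (hC.mem_of_adj ha hadj (Set.disjoint_left.mp hDS (Subtype.prop _)))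
  exact fun y hy => walk_mem (hD.preconnected ⟨x, hxD⟩ ⟨y, hy⟩).some hxC

lemma IsCompAssoc.eq_of_mem (hC : IsCompAssoc G S C) (hD : IsCompAssoc G S D) (hxC : x ∈ C)
    (hxD : x ∈ D) : C = D :=
  (hD.subset_of_setConnected hC.1 hC.2.1 hxD hxC).antisymm
    (hC.subset_of_setConnected hD.1 hD.2.1 hxC hxD)

lemma SetConnected.union_singleton_of_mem_nbhd (hC : SetConnected G C) {u : V}
    (hu : u ∈ nbhd G C) : SetConnected G (C ∪ {u}) := by
  obtain ⟨-, c, hc, hcu⟩ := hu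
  exact SimpleGraph.connected_induce_union hC.preconnected
    (SimpleGraph.connected_induce_singleton u).preconnected hc rfl hcu

/-- A maximal connected set containing `v` and avoiding `K` has no neighbor outside `K`. -/
lemma exists_isCompAssoc_mem [Finite V] (G : SimpleGraph V) {K : Set V} {v : V} (hv : v ∉ K) :
    ∃ D, IsCompAssoc G K D ∧ v ∈ D := by
  obtain ⟨D, hvD, hD⟩ := Finite.exists_le_maximal
    (p := fun D : Set V => SetConnected G D ∧ Disjoint D K) (a := {v})
    ⟨SimpleGraph.connected_induce_singleton v, Set.disjoint_singleton_left.2 hv⟩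
  refine ⟨D, ⟨hD.prop.1, hD.prop.2, ?_⟩, hvD rfl⟩
  rintro z ⟨hzD, y, hyD, hyz⟩
  by_contra hzK
  have hconn : SetConnected G (D ∪ {z}) :=
    hD.prop.1.union_singleton_of_mem_nbhd ⟨hzD, y, hyD, hyz⟩
  have hdisj : Disjoint (D ∪ {z}) K :=
    Set.disjoint_union_left.2 ⟨hD.prop.2, Set.disjoint_singleton_left.2 hzK⟩
  exact hzD (hD.2 ⟨hconn, hdisj⟩ Set.subset_union_left (Or.inr rfl))

end Components

section Crib

variable {V : Type} {G : SimpleGraph V} {S K C : Set V} {x u w : V}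

lemma mem_crib :
    x ∈ crib G S K ↔ x ∈ K \ S ∨ ∃ C, (IsCompAssoc G K C ∧ ¬ nbhd G C ⊆ S) ∧ x ∈ C := by
  simp only [crib, Set.mem_union, Set.mem_iUnion, Set.mem_ofPred_eq, exists_prop]

lemma diff_subset_crib : K \ S ⊆ crib G S K :=
  fun _ hx => mem_crib.2 (Or.inl hx)

lemma subset_crib (hC : IsCompAssoc G K C) (hCS : ¬ nbhd G C ⊆ S) : C ⊆ crib G S K :=
  fun _ hx => mem_crib.2 (Or.inr ⟨C, ⟨hC, hCS⟩, hx⟩)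

lemma disjoint_crib (hSK : S ⊆ K) : Disjoint (crib G S K) S := by
  refine Set.disjoint_left.2 fun x hx hxS => ?_
  rcases mem_crib.1 hx with ⟨-, hxS'⟩ | ⟨C, ⟨hC, -⟩, hxC⟩
  · exact hxS' hxS
  · exact Set.disjoint_left.1 hC.2.1 hxC (hSK hxS)

lemma nbhd_crib_subset [Finite V] : nbhd G (crib G S K) ⊆ S := by
  rintro z ⟨hz, u, hu, huz⟩
  by_contra hzS
  by_cases hzK : z ∈ K
  · exact hz (diff_subset_crib ⟨hzK, hzS⟩)
  rcases mem_crib.1 hu with ⟨huK, huS⟩ | ⟨C, ⟨hC, hCS⟩, huC⟩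
  · obtain ⟨D, hD, hzD⟩ := exists_isCompAssoc_mem G hzK
    have hDS : ¬ nbhd G D ⊆ S :=
      fun h => huS (h ⟨Set.disjoint_right.1 hD.2.1 huK, z, hzD, huz.symm⟩)
    exact hz (subset_crib hD hDS hzD)
  · exact hz (subset_crib hC hCS (hC.mem_of_adj huC huz hzK))

lemma reachable_crib_of_mem_nbhd (hC : IsCompAssoc G K C) (hu : u ∈ nbhd G C) (huS : u ∉ S)
    (hx : x ∈ C) (hxT : x ∈ crib G S K) (huT : u ∈ crib G S K) :
    (G.induce (crib G S K)).Reachable ⟨x, hxT⟩ ⟨u, huT⟩ := by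
  have hsub : C ∪ {u} ⊆ crib G S K :=
    Set.union_subset (subset_crib hC fun h => huS (h hu)) (Set.singleton_subset_iff.2 huT)
  exact SimpleGraph.reachable_induce_of_subset (hC.1.union_singleton_of_mem_nbhd hu).preconnected hsub
    (Or.inl hx) (Or.inr rfl)

lemma exists_reachable_of_mem_crib (hx : x ∈ crib G S K) :
    ∃ u, ∃ hu : u ∈ K \ S,
      (G.induce (crib G S K)).Reachable ⟨x, hx⟩ ⟨u, diff_subset_crib hu⟩ := by
  rcases mem_crib.1 hx with hxKS | ⟨C, ⟨hC, hCS⟩, hxC⟩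
  · exact ⟨x, hxKS, .rfl⟩
  obtain ⟨u, hu, huS⟩ := Set.not_subset.1 hCS
  have huKS : u ∈ K \ S := ⟨hC.2.2 hu, huS⟩
  exact ⟨u, huKS, reachable_crib_of_mem_nbhd hC hu huS hxC hx _⟩

lemma reachable_crib_of_cliquish (hK : Cliquish G K) (hu : u ∈ K \ S) (hw : w ∈ K \ S) :
    (G.induce (crib G S K)).Reachable ⟨u, diff_subset_crib hu⟩ ⟨w, diff_subset_crib hw⟩ := by
  by_cases huw : u = w
  · subst huw
    rfl
  rcases hK u hu.1 w hw.1 huw with hadj | ⟨C, hC, huC, hwC⟩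
  · exact SimpleGraph.Adj.reachable (G := G.induce _) hadj
  obtain ⟨c, hc, -⟩ := huC.2
  have hcT : c ∈ crib G S K := subset_crib hC (fun h => hu.2 (h huC)) hc
  exact (reachable_crib_of_mem_nbhd hC huC hu.2 hc hcT _).symm.trans
    (reachable_crib_of_mem_nbhd hC hwC hw.2 hc hcT _)

lemma setConnected_crib (hK : Cliquish G K) (hKS : (K \ S).Nonempty) :
    SetConnected G (crib G S K) := by
  obtain ⟨k, hk⟩ := hKS
  rw [SetConnected, SimpleGraph.connected_iff_exists_forall_reachable]
  refine ⟨⟨k, diff_subset_crib hk⟩, fun ⟨x, hx⟩ => ?_⟩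
  obtain ⟨u, hu, hxu⟩ := exists_reachable_of_mem_crib hx
  exact (reachable_crib_of_cliquish hK hk hu).trans hxu.symm

lemma isCompAssoc_crib [Finite V] (hK : Cliquish G K) (hS : S ⊂ K) :
    IsCompAssoc G S (crib G S K) :=
  ⟨setConnected_crib hK (Set.nonempty_of_ssubset hS), disjoint_crib hS.subset, nbhd_crib_subset⟩

end Crib

/-- If `K` is cliquish and `S` is a proper subset of `K`, then `crib S K` is the unique
component associated with `S` that intersects `K`. -/
theorem crib_unique_component {V : Type} [Finite V] (G : SimpleGraph V) (K S : Set V)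
    (hK : Cliquish G K) (hS : S ⊂ K) :
    IsCompAssoc G S (crib G S K) ∧ (crib G S K ∩ K).Nonempty ∧
      ∀ C : Set V, IsCompAssoc G S C → (C ∩ K).Nonempty → C = crib G S K := by
  have hcrib := isCompAssoc_crib hK hS
  obtain ⟨k, hk⟩ := Set.nonempty_of_ssubset hS
  refine ⟨hcrib, ⟨k, diff_subset_crib hk, hk.1⟩, ?_⟩
  rintro C hC ⟨c, hcC, hcK⟩
  exact hC.eq_of_mem hcrib hcC (diff_subset_crib ⟨hcK, Set.disjoint_left.1 hC.2.1 hcC⟩)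

end TW
end

section
/- Let C ⊆ V(G) be a connected set such that N(C) is a minimal separator of G, and let Ω be a potential maximal clique of the graph G⟨C⟩. Then Ω is a potential maximal clique of G. -/
/-!
Extend a minimal chordal completion `H₁` of `G⟨C⟩` to all of `V` by making every two vertices
outside `C` adjacent. This glues two chordal graphs along the clique `N(C)`, so it is chordal, and
it contains `G`; let `H` be a minimal chordal completion of `G` below it. As `N(C)` is a minimal
separator, some full component `B` of `N(C)` avoids `C`, and `H` has no edge between `C` and `B`;
two nonadjacent vertices of `N(C)` would then close a chordless cycle of length at least four
through `C` and `B`. So `N(C)` is a clique of `H`, hence `H[N[C]]` is a chordal graph between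
`G⟨C⟩` and `H₁`, and minimality of `H₁` gives `H[N[C]] = H₁`: every clique of `H₁` is a clique of
`H`.
-/

namespace SimpleGraph.Walk

variable {W W' : Type*} {G : SimpleGraph W} {u v : W}

theorem isChordless_map_iff {G' : SimpleGraph W'} (f : G ↪g G') {p : G.Walk u v} :
    (p.map f.toHom).IsChordless ↔ p.IsChordless := by
  simp only [isChordless_iff_forall_mem_edges, support_map, edges_map, List.mem_map]
  constructor
  · intro h x y hx hy hxy
    obtain ⟨e, he, hfe⟩ := h ⟨x, hx, rfl⟩ ⟨y, hy, rfl⟩ (f.map_adj_iff.mpr hxy)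
    rw [← Sym2.map_mk] at hfe
    rwa [← Sym2.map.injective f.injective hfe]
  · rintro h _ _ ⟨x, hx, rfl⟩ ⟨y, hy, rfl⟩ hxy
    exact ⟨s(x, y), h hx hy (f.map_adj_iff.mp hxy), rfl⟩

theorem isChordless_of_length_eq_dist (p : G.Walk u v) (hp : p.length = G.dist u v) :
    p.IsChordless := by
  classical
  have edge_of_adj : ∀ {a b} (q : G.Walk a b), q.IsSubwalk p → G.Adj a b → s(a, b) ∈ q.edges := by
    intro a b q hq hab
    have hq1 : q.length = 1 := by
      rw [length_eq_dist_of_subwalk hp hq, dist_eq_one_iff_adj.mpr hab]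
    rcases q with _ | ⟨_, _ | _⟩ <;> simp_all
  rw [isChordless_iff_forall_mem_edges]
  intro x y hx hy hxy
  by_cases hyd : y ∈ (p.dropUntil x hx).support
  · have hq := (isSubwalk_takeUntil _ hyd).trans (isSubwalk_dropUntil p hx)
    exact hq.edges_subset (edge_of_adj _ hq hxy)
  · have hyt : y ∈ (p.takeUntil x hx).support := by
      rw [← p.take_spec hx, mem_support_append_iff] at hy
      exact hy.resolve_right hyd
    have hq := (isSubwalk_dropUntil _ hyt).trans (isSubwalk_takeUntil p hx)
    exact Sym2.eq_swap ▸ hq.edges_subset (edge_of_adj _ hq hxy.symm)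

theorem exists_isPath_isChordless_of_support_subset (p : G.Walk u v) {s : Set W}
    (hp : ∀ x ∈ p.support, x ∈ s) :
    ∃ q : G.Walk u v, q.IsPath ∧ q.IsChordless ∧ ∀ x ∈ q.support, x ∈ s := by
  obtain ⟨r, hr⟩ := (p.induce s hp).reachable.exists_walk_length_eq_dist
  have hrs : ∀ x ∈ (r.map (Embedding.induce s).toHom).support, x ∈ s := by
    intro x hx
    rw [Walk.support_map] at hx
    simp only [List.mem_map] at hx
    obtain ⟨y, -, rfl⟩ := hx
    exact y.2
  exact ⟨_, (r.isPath_of_length_eq_dist hr).map (Embedding.induce (G := G) s).injective,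
    (isChordless_map_iff _).mpr (r.isChordless_of_length_eq_dist hr), hrs⟩

theorem two_le_length_of_not_adj (p : G.Walk u v) (hne : u ≠ v) (hnadj : ¬ G.Adj u v) :
    2 ≤ p.length := by
  rcases p with _ | ⟨_, _ | _⟩ <;> simp_all

theorem IsCycle.eq_or_eq_of_mem_takeUntil_of_mem_dropUntil [DecidableEq W] {c : G.Walk v v}
    (hc : c.IsCycle) (hu : u ∈ c.support) {x : W} (hxp : x ∈ (c.takeUntil u hu).support)
    (hxq : x ∈ (c.dropUntil u hu).support) : x = v ∨ x = u := by
  have hnd := hc.support_nodup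
  rw [← c.take_spec hu, tail_support_append, List.nodup_append] at hnd
  by_contra! h
  exact hnd.2.2 x (((mem_support_iff _).mp hxp).resolve_left h.1)
    x (((mem_support_iff _).mp hxq).resolve_left h.2) rfl

theorem IsChordless.rotate [DecidableEq W] {c : G.Walk v v} (hc : c.IsChordless)
    (hu : u ∈ c.support) : (c.rotate u hu).IsChordless := by
  rw [isChordless_iff_forall_mem_edges] at hc ⊢
  intro x y hx hy hxy
  rw [mem_support_rotate_iff] at hx hy
  exact (c.rotate_edges u hu).mem_iff.mpr (hc hx hy hxy)

theorem exists_mem_support_inter {a b : W} (p : G.Walk a b) {X Y : Set W}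
    (hcover : ∀ v, v ∈ X ∨ v ∈ Y) (hsep : ∀ x ∈ X \ Y, ∀ y ∈ Y \ X, ¬ G.Adj x y) (ha : a ∉ X)
    (hb : b ∈ X) : ∃ x ∈ p.support, x ∈ X ∩ Y := by
  obtain ⟨d, hd, hd₁, hd₂⟩ := p.exists_boundary_dart Xᶜ ha (not_not.mpr hb)
  rw [Set.mem_compl_iff, not_not] at hd₂
  refine ⟨d.snd, p.dart_snd_mem_support_of_mem_darts hd, hd₂, ?_⟩
  by_contra hd₂Y
  exact hsep _ ⟨hd₂, hd₂Y⟩ _ ⟨(hcover _).resolve_left hd₁, hd₁⟩ d.adj.symm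

theorem IsPath.isCycle_append_reverse {P Q : G.Walk u v} (hP : P.IsPath) (hQ : Q.IsPath)
    {X Y : Set W} (hXY : Disjoint X Y) (hPX : ∀ x ∈ P.support, x ∈ insert u (insert v X))
    (hQY : ∀ x ∈ Q.support, x ∈ insert u (insert v Y)) (hP₂ : 2 ≤ P.length) :
    (P.append Q.reverse).IsCycle := by
  refine hP.isCycle_append hQ.reverse (fun z hzP hzQ => ?_) (Or.inl hP₂)
  have hPnd := hP.support_nodup
  have hQnd := hQ.reverse.support_nodup
  rw [← cons_tail_support, List.nodup_cons] at hPnd hQnd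
  have hzu : z ≠ u := fun h => hPnd.1 (h ▸ hzP)
  have hzv : z ≠ v := fun h => hQnd.1 (h ▸ hzQ)
  replace hzQ : z ∈ Q.support := by
    simpa using List.mem_of_mem_tail hzQ
  rcases hPX z (List.mem_of_mem_tail hzP) with h | h | hzX
  · exact hzu h
  · exact hzv h
  rcases hQY z hzQ with h | h | hzY
  · exact hzu h
  · exact hzv h
  exact hXY.notMem_of_mem_left hzX hzY

theorem IsChordless.append_reverse {P Q : G.Walk u v} (hPc : P.IsChordless)
    (hQc : Q.IsChordless) {X Y : Set W} (hno : ∀ x ∈ X, ∀ y ∈ Y, ¬ G.Adj x y)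
    (hPX : ∀ x ∈ P.support, x ∈ insert u (insert v X))
    (hQY : ∀ x ∈ Q.support, x ∈ insert u (insert v Y)) : (P.append Q.reverse).IsChordless := by
  have hcross : ∀ x ∈ P.support, ∀ y ∈ Q.support, G.Adj x y →
      s(x, y) ∈ P.edges ∨ s(x, y) ∈ Q.edges := by
    intro x hx y hy hxy
    rcases hPX x hx with rfl | rfl | hxX
    · exact Or.inr (hQc.mem_edges Q.start_mem_support hy hxy)
    · exact Or.inr (hQc.mem_edges Q.end_mem_support hy hxy)
    rcases hQY y hy with rfl | rfl | hyY
    · exact Or.inl (hPc.mem_edges hx P.start_mem_support hxy)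
    · exact Or.inl (hPc.mem_edges hx P.end_mem_support hxy)
    · exact absurd hxy (hno x hxX y hyY)
  rw [isChordless_iff_forall_mem_edges]
  intro x y hx hy hxy
  simp only [mem_support_append_iff, support_reverse, List.mem_reverse] at hx hy
  simp only [edges_append, edges_reverse, List.mem_append, List.mem_reverse]
  rcases hx with hx | hx <;> rcases hy with hy | hy
  · exact Or.inl (hPc.mem_edges hx hy hxy)
  · exact hcross x hx y hy hxy
  · rw [Sym2.eq_swap]; exact hcross y hy x hx hxy.symm
  · exact Or.inr (hQc.mem_edges hx hy hxy)

end SimpleGraph.Walk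

namespace TW

open SimpleGraph Walk

section Chordal

variable {W : Type} {H : SimpleGraph W}

theorem isChordal_iff :
    IsChordal H ↔ ∀ ⦃v : W⦄ (c : H.Walk v v), c.IsCycle → c.IsChordless → c.length = 3 := by
  simp only [IsChordal, isChordless_iff_forall_mem_edges]
  exact forall_congr' fun v => forall_congr' fun c => forall_congr' fun _ =>
    imp_congr_left ⟨fun h x y hx hy => h x hx y hy, fun h x hx y hy => h hx hy⟩

theorem IsChordal.induce (hH : IsChordal H) (s : Set W) : IsChordal (H.induce s) := by
  rw [isChordal_iff] at hH ⊢
  intro v c hc hch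
  rw [← length_map (Embedding.induce s).toHom]
  exact hH _ ((isCycle_map_iff_of_injective (Embedding.induce (G := H) s).injective).mpr hc)
    ((isChordless_map_iff _).mpr hch)

theorem IsChordal.length_eq_three_of_support_subset {s : Set W} (hs : IsChordal (H.induce s))
    {v : W} {c : H.Walk v v} (hc : c.IsCycle) (hch : c.IsChordless)
    (hcs : ∀ x ∈ c.support, x ∈ s) : c.length = 3 := by
  have hinduced : ∀ {a : s} (d : (H.induce s).Walk a a),
      (d.map (Embedding.induce s).toHom).IsCycle → (d.map (Embedding.induce s).toHom).IsChordless →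
      (d.map (Embedding.induce s).toHom).length = 3 := fun d hd hdc => by
    rw [length_map]
    exact isChordal_iff.mp hs d
      ((isCycle_map_iff_of_injective (Embedding.induce (G := H) s).injective).mp hd)
      ((isChordless_map_iff _).mp hdc)
  have := hinduced (c.induce s hcs)
  rw [map_induce] at this
  exact this hc hch

theorem isChordal_top : IsChordal (⊤ : SimpleGraph W) := by
  rw [isChordal_iff]
  intro v c hc hch
  have h3 := hc.three_le_length
  have hne : c.getVert 2 ≠ v := fun h => by
    rcases (hc.getVert_endpoint_iff (by omega)).mp h with h | h <;> omega
  have hnbr : c.getVert 2 ∈ c.toSubgraph.neighborSet v := by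
    rw [Subgraph.mem_neighborSet, adj_toSubgraph_iff_mem_edges]
    exact hch.mem_edges c.start_mem_support (c.getVert_mem_support 2) ((top_adj _ _).mpr hne.symm)
  rw [hc.neighborSet_toSubgraph_endpoint] at hnbr
  rcases hnbr with h | h <;>
  · have := hc.getVert_injOn (by simp; omega) (by simp; omega) h
    omega

theorem isChordal_of_cliqueSum {X Y : Set W} (hcover : ∀ v, v ∈ X ∨ v ∈ Y)
    (hsep : ∀ x ∈ X \ Y, ∀ y ∈ Y \ X, ¬ H.Adj x y) (hclique : H.IsClique (X ∩ Y))
    (hX : IsChordal (H.induce X)) (hY : IsChordal (H.induce Y)) : IsChordal H := by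
  classical
  rw [isChordal_iff]
  intro v c hc hch
  by_cases hcX : ∀ x ∈ c.support, x ∈ X
  · exact hX.length_eq_three_of_support_subset hc hch hcX
  by_cases hcY : ∀ x ∈ c.support, x ∈ Y
  · exact hY.length_eq_three_of_support_subset hc hch hcY
  exfalso
  push Not at hcX hcY
  obtain ⟨a, ha, haX⟩ := hcX
  obtain ⟨b, hb, hbY⟩ := hcY
  have hbX : b ∈ X := (hcover b).resolve_right hbY
  -- Rotated to start at `a ∉ X`, the cycle splits at `b ∉ Y` into two `a`–`b` walks,
  -- each of which enters `X` through `X ∩ Y`; the two entry points would span a chord.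
  set c' := c.rotate a ha
  have hc' : c'.IsCycle := hc.rotate ha
  have hb' : b ∈ c'.support := (mem_support_rotate_iff _ _ _).mpr hb
  have hsplit : c'.edges = (c'.takeUntil b hb').edges ++ (c'.dropUntil b hb').edges := by
    rw [← edges_append, take_spec]
  have hshared : ∀ x ∈ (c'.takeUntil b hb').support, x ∈ (c'.dropUntil b hb').support →
      x ∉ X ∩ Y := fun x hxp hxq hx =>
    (hc'.eq_or_eq_of_mem_takeUntil_of_mem_dropUntil hb' hxp hxq).elim
      (fun h => haX (h ▸ hx.1)) (fun h => hbY (h ▸ hx.2))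
  obtain ⟨x, hxp, hx⟩ := (c'.takeUntil b hb').exists_mem_support_inter hcover hsep haX hbX
  obtain ⟨y, hyq, hy⟩ := (c'.dropUntil b hb').reverse.exists_mem_support_inter hcover hsep haX hbX
  rw [support_reverse, List.mem_reverse] at hyq
  have hxy : x ≠ y := fun h => hshared x hxp (h ▸ hyq) hx
  have hedge := (hch.rotate ha).mem_edges (support_takeUntil_subset_support _ _ hxp)
    (support_dropUntil_subset_support _ _ hyq) (hclique hx hy hxy)
  rw [hsplit, List.mem_append] at hedge
  rcases hedge with h | h
  · exact hshared y (snd_mem_support_of_mem_edges _ h) hyq hy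
  · exact hshared x hxp (fst_mem_support_of_mem_edges _ h) hx

theorem IsChordal.adj_of_walks (hH : IsChordal H) {X Y : Set W} (hXY : Disjoint X Y)
    (hno : ∀ x ∈ X, ∀ y ∈ Y, ¬ H.Adj x y) {u v : W} (huv : u ≠ v)
    (p : H.Walk u v) (hp : ∀ x ∈ p.support, x ∈ insert u (insert v X))
    (q : H.Walk u v) (hq : ∀ x ∈ q.support, x ∈ insert u (insert v Y)) : H.Adj u v := by
  -- Otherwise shortest such walks close a chordless cycle of length at least four.
  by_contra hnadj
  obtain ⟨P, hP, hPc, hPX⟩ := p.exists_isPath_isChordless_of_support_subset hp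
  obtain ⟨Q, hQ, hQc, hQY⟩ := q.exists_isPath_isChordless_of_support_subset hq
  have hP₂ := P.two_le_length_of_not_adj huv hnadj
  have hQ₂ := Q.two_le_length_of_not_adj huv hnadj
  have h₃ := isChordal_iff.mp hH _ (hP.isCycle_append_reverse hQ hXY hPX hQY hP₂)
    (hPc.append_reverse hQc hno hPX hQY)
  rw [length_append, length_reverse] at h₃
  omega

theorem exists_minChordalCompletion_le [Finite W] {G : SimpleGraph W} (hGH : G ≤ H)
    (hH : IsChordal H) : ∃ H₀ ≤ H, MinChordalCompletion G H₀ := by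
  obtain ⟨H₀, hle, hmin⟩ :=
    exists_minimal_le_of_wellFoundedLT (fun H' => G ≤ H' ∧ IsChordal H') H ⟨hGH, hH⟩
  exact ⟨H₀, hle, hmin.prop.1, hmin.prop.2, fun H' h₁ h₂ h₃ => hmin.eq_of_le ⟨h₁, h₃⟩ h₂⟩

end Chordal

section Separator

variable {W : Type} {G : SimpleGraph W} {A B C S : Set W}

theorem disjoint_nbhd (G : SimpleGraph W) (C : Set W) : Disjoint C (nbhd G C) :=
  Set.disjoint_right.mpr fun _ h => h.1

theorem SetConnected.subset_of_nbhd_subset (hC : SetConnected G C) (hCS : Disjoint C S)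
    (hA : nbhd G A ⊆ S) (hCA : (C ∩ A).Nonempty) : C ⊆ A := by
  obtain ⟨a, haC, haA⟩ := hCA
  intro c hc
  by_contra hcA
  obtain ⟨p⟩ := hC.preconnected ⟨a, haC⟩ ⟨c, hc⟩
  obtain ⟨d, -, hd₁, hd₂⟩ := p.exists_boundary_dart (Subtype.val ⁻¹' A) haA hcA
  exact hCS.notMem_of_mem_left d.snd.2 (hA ⟨hd₂, _, hd₁, d.adj⟩)

theorem IsCompAssoc.eq_of_not_disjoint (hA : IsCompAssoc G S A) (hB : IsCompAssoc G S B)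
    (hAB : ¬ Disjoint A B) : A = B := by
  rw [Set.not_disjoint_iff_nonempty_inter] at hAB
  exact (hA.1.subset_of_nbhd_subset hA.2.1 hB.2.2 hAB).antisymm
    (hB.1.subset_of_nbhd_subset hB.2.1 hA.2.2 (Set.inter_comm A B ▸ hAB))

theorem exists_isFullComp_disjoint (hC : SetConnected G C)
    (hmin : MinimalSeparator G (nbhd G C)) : ∃ B, IsFullComp G (nbhd G C) B ∧ Disjoint C B := by
  obtain ⟨A, B, hA, hB, hAB⟩ := hmin
  by_cases hCA : Disjoint C A
  · exact ⟨A, hA, hCA⟩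
  have hCA : C ⊆ A := hC.subset_of_nbhd_subset (disjoint_nbhd G C) hA.2.le
    (Set.not_disjoint_iff_nonempty_inter.mp hCA)
  exact ⟨B, hB, Set.disjoint_of_subset_left hCA
    (by_contra fun h => hAB (hA.1.eq_of_not_disjoint hB.1 h))⟩

theorem SetConnected.exists_walk_of_mem_nbhd (hC : SetConnected G C) {u v : W}
    (hu : u ∈ nbhd G C) (hv : v ∈ nbhd G C) :
    ∃ p : G.Walk u v, ∀ x ∈ p.support, x ∈ insert u (insert v C) := by
  obtain ⟨-, a, ha, hau⟩ := hu
  obtain ⟨-, b, hb, hbv⟩ := hv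
  obtain ⟨p⟩ := hC.preconnected ⟨a, ha⟩ ⟨b, hb⟩
  set f := (Embedding.induce (G := G) C).toHom
  have hpC : ∀ x ∈ (p.map f).support, x ∈ C := by
    intro x hx
    rw [Walk.support_map] at hx
    simp only [List.mem_map] at hx
    obtain ⟨y, -, rfl⟩ := hx
    exact y.2
  refine ⟨.cons (show G.Adj u (f ⟨a, ha⟩) from hau.symm)
    ((p.map f).concat (show G.Adj (f ⟨b, hb⟩) v from hbv)), ?_⟩
  simp only [support_cons, support_concat, List.mem_cons, List.mem_append, List.not_mem_nil,
    or_false]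
  rintro x (rfl | hx | rfl)
  exacts [Or.inl rfl, Or.inr (Or.inr (hpC x hx)), Or.inr (Or.inl rfl)]

theorem IsChordal.isClique_nbhd {H : SimpleGraph W} (hH : IsChordal H) (hGH : G ≤ H)
    (hC : SetConnected G C) (hB : IsFullComp G (nbhd G C) B) (hCB : Disjoint C B)
    (hno : ∀ x ∈ C, ∀ y ∈ B, ¬ H.Adj x y) : H.IsClique (nbhd G C) := by
  intro u hu v hv huv
  obtain ⟨p, hp⟩ := hC.exists_walk_of_mem_nbhd hu hv
  rw [← hB.2] at hu hv
  obtain ⟨q, hq⟩ := hB.1.1.exists_walk_of_mem_nbhd hu hv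
  exact hH.adj_of_walks hCB hno huv (p.mapLe hGH) (by simpa using hp) (q.mapLe hGH)
    (by simpa using hq)

end Separator

section CompleteOutside

variable {W : Type} {G : SimpleGraph W} {C : Set W} {H : SimpleGraph (nbhdClosed G C)}
  {x y : W}

def completeOutside (G : SimpleGraph W) (C : Set W) (H : SimpleGraph (nbhdClosed G C)) :
    SimpleGraph W :=
  H.map (Function.Embedding.subtype _) ⊔ cliqueOn Cᶜ

theorem completeOutside_adj : (completeOutside G C H).Adj x y ↔
    (∃ (hx : x ∈ nbhdClosed G C) (hy : y ∈ nbhdClosed G C), H.Adj ⟨x, hx⟩ ⟨y, hy⟩) ∨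
      (x ≠ y ∧ x ∉ C ∧ y ∉ C) := by
  simp only [completeOutside, sup_adj, map_adj, Function.Embedding.subtype_apply, cliqueOn,
    Set.mem_compl_iff]
  refine or_congr_left ⟨?_, fun ⟨hx, hy, h⟩ => ⟨_, _, h, rfl, rfl⟩⟩
  rintro ⟨⟨x, hx⟩, ⟨y, hy⟩, h, rfl, rfl⟩
  exact ⟨hx, hy, h⟩

theorem mem_nbhdClosed_of_adj (hxy : G.Adj x y) (hx : x ∈ C) : y ∈ nbhdClosed G C := by
  by_cases hy : y ∈ C
  exacts [Or.inl hy, Or.inr ⟨hy, x, hx, hxy⟩]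

theorem mem_nbhdClosed_of_completeOutside_adj (hxy : (completeOutside G C H).Adj x y)
    (hx : x ∈ C) : y ∈ nbhdClosed G C := by
  rcases completeOutside_adj.mp hxy with ⟨-, hy, -⟩ | ⟨-, hxC, -⟩
  exacts [hy, absurd hx hxC]

theorem induce_completeOutside (hH : gAngle G C ≤ H) :
    (completeOutside G C H).induce (nbhdClosed G C) = H := by
  ext ⟨x, hx⟩ ⟨y, hy⟩
  rw [induce_adj, completeOutside_adj]
  constructor
  · rintro (⟨_, _, h⟩ | ⟨hne, hxC, hyC⟩)
    · exact h
    · exact hH (Or.inr ⟨hne, hx.resolve_left hxC, hy.resolve_left hyC⟩)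
  · exact fun h => Or.inl ⟨hx, hy, h⟩

theorem le_completeOutside (hH : gAngle G C ≤ H) : G ≤ completeOutside G C H := by
  intro x y hxy
  rw [completeOutside_adj]
  by_cases h : x ∈ C ∨ y ∈ C
  · obtain ⟨hx, hy⟩ : x ∈ nbhdClosed G C ∧ y ∈ nbhdClosed G C := by
      rcases h with h | h
      exacts [⟨Or.inl h, mem_nbhdClosed_of_adj hxy h⟩, ⟨mem_nbhdClosed_of_adj hxy.symm h, Or.inl h⟩]
    exact Or.inl ⟨hx, hy, hH (Or.inl hxy)⟩
  · rw [not_or] at h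
    exact Or.inr ⟨hxy.ne, h⟩

theorem isChordal_completeOutside (hH : gAngle G C ≤ H) (hch : IsChordal H) :
    IsChordal (completeOutside G C H) := by
  refine isChordal_of_cliqueSum (X := nbhdClosed G C) (Y := Cᶜ) (fun v => ?_) ?_ ?_ ?_ ?_
  · by_cases hv : v ∈ C
    exacts [Or.inl (Or.inl hv), Or.inr hv]
  · rintro x ⟨-, hxC⟩ y ⟨-, hyN⟩ hxy
    exact hyN (mem_nbhdClosed_of_completeOutside_adj hxy (not_not.mp hxC))
  · intro x hx y hy hxy
    exact completeOutside_adj.mpr (Or.inr ⟨hxy, hx.2, hy.2⟩)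
  · rwa [induce_completeOutside hH]
  · convert isChordal_top
    ext ⟨x, hx⟩ ⟨y, hy⟩
    rw [induce_adj, completeOutside_adj, top_adj]
    constructor
    · rintro (⟨_, _, h⟩ | ⟨h, -, -⟩) heq <;> obtain rfl : x = y := congrArg Subtype.val heq
      exacts [h.ne rfl, h rfl]
    · exact fun h => Or.inr ⟨fun e => h (Subtype.ext e), hx, hy⟩

end CompleteOutside

theorem exists_minChordalCompletion_induce_eq {W : Type} [Finite W] {G : SimpleGraph W}
    {C : Set W} (hC : SetConnected G C) (hmin : MinimalSeparator G (nbhd G C))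
    {H₁ : SimpleGraph (nbhdClosed G C)} (hH₁ : MinChordalCompletion (gAngle G C) H₁) :
    ∃ H, MinChordalCompletion G H ∧ H.induce (nbhdClosed G C) = H₁ := by
  obtain ⟨hle₁, hch₁, hmin₁⟩ := hH₁
  obtain ⟨H, hHle, hH⟩ := exists_minChordalCompletion_le (le_completeOutside hle₁)
    (isChordal_completeOutside hle₁ hch₁)
  obtain ⟨B, hB, hCB⟩ := exists_isFullComp_disjoint hC hmin
  have hclique : H.IsClique (nbhd G C) := by
    refine hH.2.1.isClique_nbhd hH.1 hC hB hCB fun x hx y hy hxy => ?_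
    rcases mem_nbhdClosed_of_completeOutside_adj (hHle hxy) hx with hyC | hyS
    exacts [hCB.notMem_of_mem_left hyC hy, hB.1.2.1.notMem_of_mem_left hy hyS]
  refine ⟨H, hH, hmin₁ _ ?_ ?_ (hH.2.1.induce _)⟩
  · rintro ⟨x, hx⟩ ⟨y, hy⟩ (hxy | ⟨hne, hxS, hyS⟩)
    · exact hH.1 hxy
    · exact hclique hxS hyS hne
  · rw [← induce_completeOutside hle₁]
    exact fun _ _ h => hHle h

theorem pmc_of_gAngle_pmc_general {V : Type} [Finite V] (G : SimpleGraph V)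
    (C : Set V) (hC : SetConnected G C) (hmin : MinimalSeparator G (nbhd G C))
    (Ω : Set ↥(nbhdClosed G C)) (hΩ : PMC (gAngle G C) Ω) :
    PMC G (Subtype.val '' Ω) := by
  obtain ⟨H₁, hH₁, hΩ⟩ := hΩ
  obtain ⟨H, hH, rfl⟩ := exists_minChordalCompletion_induce_eq hC hmin hH₁
  exact ⟨H, hH, hΩ.map.mono (map_comap_le _ _)⟩

/-- If `C` is a connected set such that `N(C)` is a minimal separator of `G`, then every
potential maximal clique of `G⟨C⟩` is a potential maximal clique of `G`. -/
theorem pmc_of_gAngle_pmc {V : Type} [Finite V] (G : SimpleGraph V) (hG : G.Connected)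
    (C : Set V) (hC : SetConnected G C) (hmin : MinimalSeparator G (nbhd G C))
    (Ω : Set ↥(nbhdClosed G C)) (hΩ : PMC (gAngle G C) Ω) :
    PMC G (Subtype.val '' Ω) :=
  pmc_of_gAngle_pmc_general G C hC hmin Ω hΩ

end TW
end

section
/- Let k be a positive integer and let Ω be a feasible potential maximal clique of G. Then Ω is buildable. -/
namespace SimpleGraph.Walk

variable {V : Type} {G : SimpleGraph V} {u x y : V}

theorem IsCycle.exists_arcs {c : G.Walk u u} (hc : c.IsCycle) (hx : x ∈ c.support)
    (hy : y ∈ c.support) :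
    ∃ (p : G.Walk x y) (q : G.Walk y x),
      (∀ z, z ∈ p.support ∨ z ∈ q.support → z ∈ c.support) ∧
      (∀ e ∈ c.edges, e ∈ p.edges ∨ e ∈ q.edges) ∧
      ∀ z ∈ p.support, z ∈ q.support → z = x ∨ z = y := by
  classical
  have hy' : y ∈ (c.rotate x hx).support := (c.mem_support_rotate_iff x hx).2 hy
  have hspec := (c.rotate x hx).take_spec hy'
  set p := (c.rotate x hx).takeUntil y hy'
  set q := (c.rotate x hx).dropUntil y hy'
  refine ⟨p, q, fun z hz => ?_, fun e he => ?_, fun z hzp hzq => ?_⟩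
  · rw [← c.mem_support_rotate_iff x hx, ← hspec, mem_support_append_iff]
    exact hz
  · rw [← List.mem_append, ← edges_append, hspec]
    exact (c.rotate_edges x hx).mem_iff.2 he
  · by_contra! hne
    have hnodup := (hc.rotate hx).support_nodup
    rw [← hspec, tail_support_append, List.nodup_append] at hnodup
    rw [← p.cons_tail_support, List.mem_cons] at hzp
    rw [← q.cons_tail_support, List.mem_cons] at hzq
    exact hnodup.2.2 z (hzp.resolve_left hne.1) z (hzq.resolve_left hne.2) rfl

end SimpleGraph.Walk

namespace TW

variable {V : Type} {G H : SimpleGraph V} {S T C D Ω : Set V} {u v x y z : V}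

def ReachableAvoiding (G : SimpleGraph V) (S : Set V) (x y : V) : Prop :=
  ∃ p : G.Walk x y, ∀ z ∈ p.support, z ∉ S

namespace ReachableAvoiding

lemma refl (hx : x ∉ S) : ReachableAvoiding G S x x :=
  ⟨.nil, by simpa using hx⟩

lemma symm (h : ReachableAvoiding G S x y) : ReachableAvoiding G S y x := by
  obtain ⟨p, hp⟩ := h
  exact ⟨p.reverse, by simpa using hp⟩

lemma trans (h : ReachableAvoiding G S x y) (h' : ReachableAvoiding G S y z) :
    ReachableAvoiding G S x z := by
  obtain ⟨p, hp⟩ := h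
  obtain ⟨q, hq⟩ := h'
  refine ⟨p.append q, fun w hw => ?_⟩
  rw [SimpleGraph.Walk.mem_support_append_iff] at hw
  exact hw.elim (hp w) (hq w)

lemma of_adj (hxy : G.Adj x y) (hx : x ∉ S) (hy : y ∉ S) : ReachableAvoiding G S x y :=
  ⟨hxy.toWalk, by simp [hx, hy]⟩

lemma notMem_right (h : ReachableAvoiding G S x y) : y ∉ S := by
  obtain ⟨p, hp⟩ := h
  exact hp y p.end_mem_support

lemma of_mem_support (p : G.Walk x y) (hp : ∀ w ∈ p.support, w ∉ S) (hz : z ∈ p.support) :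
    ReachableAvoiding G S x z := by
  classical
  exact ⟨p.takeUntil z hz, fun w hw => hp w (p.support_takeUntil_subset_support hz hw)⟩

end ReachableAvoiding

/-- The component of `G - S` containing `x`; empty when `x ∈ S`. -/
def componentOf (G : SimpleGraph V) (S : Set V) (x : V) : Set V :=
  {y | ReachableAvoiding G S x y}

lemma mem_componentOf_self (hx : x ∉ S) : x ∈ componentOf G S x :=
  ReachableAvoiding.refl hx

lemma notMem_of_mem_componentOf (hy : y ∈ componentOf G S x) : y ∉ S :=
  ReachableAvoiding.notMem_right hy

lemma mem_componentOf_of_adj (hy : y ∈ componentOf G S x) (hyz : G.Adj y z) (hz : z ∉ S) :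
    z ∈ componentOf G S x :=
  ReachableAvoiding.trans hy (.of_adj hyz (notMem_of_mem_componentOf hy) hz)

lemma componentOf_eq (h : ReachableAvoiding G S x y) : componentOf G S x = componentOf G S y :=
  Set.ext fun _ => ⟨h.symm.trans, h.trans⟩

lemma isCompAssoc_componentOf (hx : x ∉ S) : IsCompAssoc G S (componentOf G S x) := by
  refine ⟨?_, Set.disjoint_left.2 fun _ => notMem_of_mem_componentOf, ?_⟩
  · refine G.induce_connected_of_patches x (mem_componentOf_self hx) fun {y} ⟨p, hp⟩ => ?_
    exact ⟨{z | z ∈ p.support}, fun z hz => ReachableAvoiding.of_mem_support p hp hz,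
      p.start_mem_support, p.end_mem_support, p.connected_induce_support.preconnected _ _⟩
  · rintro w ⟨hw, y, hy, hyw⟩
    by_contra hwS
    exact hw (mem_componentOf_of_adj hy hyw hwS)

lemma exists_mem_nbhd_componentOf (p : G.Walk x y) (hx : x ∉ T) (hy : y ∈ T) :
    ∃ t ∈ p.support, t ∈ T ∧ t ∈ nbhd G (componentOf G T x) := by
  induction p with
  | nil => exact absurd hy hx
  | @cons x z y hxz q ih =>
    by_cases hz : z ∈ T
    · exact ⟨z, by simp, hz, fun h => notMem_of_mem_componentOf h hz, x,
        mem_componentOf_self hx, hxz⟩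
    · obtain ⟨t, ht, htT, htN⟩ := ih hz hy
      rw [componentOf_eq (.of_adj hxz hx hz)]
      exact ⟨t, by simp [ht], htT, htN⟩

lemma isCompAssoc_nbhd (hC : SetConnected G C) : IsCompAssoc G (nbhd G C) C :=
  ⟨hC, Set.disjoint_right.2 fun _ h => h.1, subset_rfl⟩

namespace IsCompAssoc

lemma nonempty (hC : IsCompAssoc G S C) : C.Nonempty :=
  Set.nonempty_coe_sort.1 hC.1.nonempty

lemma mem_of_reachableAvoiding (hC : IsCompAssoc G S C) (hx : x ∈ C)
    (h : ReachableAvoiding G S x y) : y ∈ C := by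
  obtain ⟨p, hp⟩ := h
  induction p with
  | nil => exact hx
  | @cons x z y hxz q ih =>
    have hz : z ∈ C := by
      by_contra hzC
      exact hp z (by simp) (hC.2.2 ⟨hzC, x, hx, hxz⟩)
    exact ih hz fun w hw => hp w (by simp [hw])

lemma reachableAvoiding (hC : IsCompAssoc G S C) (hT : Disjoint C T) (hx : x ∈ C)
    (hy : y ∈ C) : ReachableAvoiding G T x y := by
  obtain ⟨q⟩ := hC.1.preconnected ⟨x, hx⟩ ⟨y, hy⟩
  refine ⟨q.map (SimpleGraph.Embedding.induce C).toHom, fun w hw => ?_⟩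
  change w ∈ (q.map _).support at hw
  rw [SimpleGraph.Walk.support_map, List.mem_map] at hw
  obtain ⟨w', -, rfl⟩ := hw
  exact Set.disjoint_left.1 hT w'.2

lemma subset_componentOf (hC : IsCompAssoc G S C) (hT : Disjoint C T) (hx : x ∈ C) :
    C ⊆ componentOf G T x :=
  fun _ => hC.reachableAvoiding hT hx

lemma eq_componentOf (hC : IsCompAssoc G S C) (hx : x ∈ C) : C = componentOf G S x :=
  (hC.subset_componentOf hC.2.1 hx).antisymm fun _ => hC.mem_of_reachableAvoiding hx

lemma eq_or_disjoint (hC : IsCompAssoc G S C) (hD : IsCompAssoc G S D) : C = D ∨ Disjoint C D := by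
  refine (Set.disjoint_or_nonempty_inter C D).symm.imp (fun ⟨x, hxC, hxD⟩ => ?_) id
  rw [hC.eq_componentOf hxC, hD.eq_componentOf hxD]

lemma disjoint_of_subset (hC : IsCompAssoc G S C) (hT : T ⊆ S) : Disjoint C T :=
  hC.2.1.mono_right hT

lemma nbhd_diff_subset_componentOf (hC : IsCompAssoc G S C) (hT : T ⊆ S) (hx : x ∈ C) :
    nbhd G C \ T ⊆ componentOf G T x := by
  rintro w ⟨⟨-, y, hy, hyw⟩, hwT⟩
  exact mem_componentOf_of_adj (hC.subset_componentOf (hC.disjoint_of_subset hT) hx hy) hyw hwT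

lemma nbhd_eq (hC : IsCompAssoc G S C) (h : ∀ s ∈ S, ∃ c ∈ C, G.Adj c s) : nbhd G C = S :=
  hC.2.2.antisymm fun s hs =>
    let ⟨c, hc, hcs⟩ := h s hs
    ⟨Set.disjoint_right.1 hC.2.1 hs, c, hc, hcs⟩

end IsCompAssoc

def pruneCrossEdges (G H : SimpleGraph V) (S : Set V) : SimpleGraph V where
  Adj x y := H.Adj x y ∧ (x ∉ S → y ∉ S → ReachableAvoiding G S x y)
  symm := ⟨fun _ _ h => ⟨h.1.symm, fun hy hx => (h.2 hx hy).symm⟩⟩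
  loopless := ⟨fun x h => H.loopless.irrefl x h.1⟩

lemma pruneCrossEdges_le : pruneCrossEdges G H S ≤ H := fun _ _ h => h.1

lemma le_pruneCrossEdges (hGH : G ≤ H) : G ≤ pruneCrossEdges G H S :=
  fun _ _ hxy => ⟨hGH hxy, ReachableAvoiding.of_adj hxy⟩

lemma reachableAvoiding_of_walk_pruneCrossEdges (p : (pruneCrossEdges G H S).Walk x y)
    (hp : ∀ z ∈ p.support, z ∉ S) : ReachableAvoiding G S x y := by
  induction p with
  | nil => exact .refl (hp _ (by simp))
  | @cons x z y hxz q ih =>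
    exact (hxz.2 (hp x (by simp)) (hp z (by simp))).trans (ih fun w hw => hp w (by simp [hw]))

/-- A chord of a cycle of the pruned graph that is missing from the pruned graph joins two
components of `G - S`, so both arcs of the cycle between its ends meet `S`; the clique `S`
then gives a chord of the pruned cycle. -/
lemma isChordal_pruneCrossEdges (hH : IsChordal H) (hS : H.IsClique S) :
    IsChordal (pruneCrossEdges G H S) := by
  intro _ c hc hind
  by_contra hlen
  have hcH : ∀ e ∈ c.edges, e ∈ H.edgeSet := fun e he =>
    SimpleGraph.edgeSet_mono pruneCrossEdges_le (c.edges_subset_edgeSet he)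
  obtain ⟨x, hx, y, hy, hxy, hxyc⟩ :
      ∃ x ∈ c.support, ∃ y ∈ c.support, H.Adj x y ∧ s(x, y) ∉ c.edges := by
    by_contra! h
    exact hlen (by simpa using hH (c.transfer H hcH) (hc.transfer hcH) (by simpa using h))
  have hxyP : ¬ (pruneCrossEdges G H S).Adj x y := fun h => hxyc (hind x hx y hy h)
  simp only [pruneCrossEdges, hxy, true_and, Classical.not_imp] at hxyP
  obtain ⟨hxS, hyS, hxy_far⟩ := hxyP
  obtain ⟨p, q, hpq, hc_edges, hpq_meet⟩ := hc.exists_arcs hx hy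
  obtain ⟨a, hap, haS⟩ : ∃ a ∈ p.support, a ∈ S := by
    by_contra! h
    exact hxy_far (reachableAvoiding_of_walk_pruneCrossEdges p h)
  obtain ⟨b, hbq, hbS⟩ : ∃ b ∈ q.support, b ∈ S := by
    by_contra! h
    exact hxy_far (reachableAvoiding_of_walk_pruneCrossEdges q h).symm
  have hab_arc : ∀ {w}, w ∈ p.support → w ∈ q.support → w ∉ S := fun hwp hwq hwS =>
    (hpq_meet _ hwp hwq).elim (fun h => hxS (h ▸ hwS)) (fun h => hyS (h ▸ hwS))
  have hab : a ≠ b := fun h => hab_arc hap (h ▸ hbq) haS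
  have habc : s(a, b) ∈ c.edges :=
    hind a (hpq a (.inl hap)) b (hpq b (.inr hbq)) ⟨hS haS hbS hab, fun h => absurd haS h⟩
  rcases hc_edges _ habc with h | h
  · exact hab_arc (p.snd_mem_support_of_mem_edges h) hbq hbS
  · exact hab_arc hap (q.fst_mem_support_of_mem_edges h) haS

lemma MinChordalCompletion.reachableAvoiding (hH : MinChordalCompletion G H) (hS : H.IsClique S)
    (hxy : H.Adj x y) (hx : x ∉ S) (hy : y ∉ S) : ReachableAvoiding G S x y := by
  have hprune : pruneCrossEdges G H S = H :=
    hH.2.2 _ (le_pruneCrossEdges hH.1) pruneCrossEdges_le (isChordal_pruneCrossEdges hH.2.1 hS)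
  rw [← hprune] at hxy
  exact hxy.2 hx hy

lemma exists_isCompAssoc_of_reachableAvoiding (hu : u ∈ Ω) (hv : v ∈ Ω) (huv : u ≠ v)
    (hadj : ¬ G.Adj u v) (h : ReachableAvoiding G (Ω \ {u, v}) u v) :
    ∃ C, IsCompAssoc G Ω C ∧ u ∈ nbhd G C ∧ v ∈ nbhd G C := by
  classical
  obtain ⟨p, hp⟩ := h
  have hpath := p.bypass_isPath
  have hp' : ∀ w ∈ p.bypass.support, w ∈ Ω → w = u ∨ w = v := fun w hw hwΩ => by
    by_contra! hne
    exact hp w (p.support_bypass_subset_support hw) ⟨hwΩ, by simpa using hne⟩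
  generalize p.bypass = q at hpath hp'
  cases q with
  | nil => exact absurd rfl huv
  | @cons _ z _ huz q =>
    have hzΩ : z ∉ Ω := fun hz =>
      (hp' z (by simp) hz).elim (fun h => huz.ne h.symm) (fun h => hadj (h ▸ huz))
    obtain ⟨t, htq, htΩ, htN⟩ := exists_mem_nbhd_componentOf q hzΩ hv
    have htv : t = v := ((hp' t (by simp [htq]) htΩ).resolve_left fun htu =>
      ((SimpleGraph.Walk.cons_isPath_iff huz q).1 hpath).2 (htu ▸ htq))
    exact ⟨componentOf G Ω z, isCompAssoc_componentOf hzΩ,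
      ⟨fun h => notMem_of_mem_componentOf h hu, z, mem_componentOf_self hzΩ, huz.symm⟩, htv ▸ htN⟩

lemma PMC.cliquish (hΩ : PMC G Ω) : Cliquish G Ω := by
  intro u hu v hv huv
  refine or_iff_not_imp_left.2 fun hadj => exists_isCompAssoc_of_reachableAvoiding hu hv huv hadj ?_
  obtain ⟨H, hH, hΩH⟩ := hΩ
  exact hH.reachableAvoiding (hΩH.subset Set.sdiff_subset) (hΩH hu hv huv) (by simp) (by simp)

namespace Cliquish

lemma reachableAvoiding (hΩ : Cliquish G Ω) (hT : T ⊆ Ω) (hx : x ∈ Ω) (hxT : x ∉ T)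
    (hy : y ∈ Ω) (hyT : y ∉ T) : ReachableAvoiding G T x y := by
  obtain rfl | hxy := eq_or_ne x y
  · exact .refl hxT
  obtain hadj | ⟨C, hC, ⟨-, c, hc, hcx⟩, ⟨-, d, hd, hdy⟩⟩ := hΩ x hx y hy hxy
  · exact .of_adj hadj hxT hyT
  have hCT := hC.disjoint_of_subset hT
  exact (ReachableAvoiding.of_adj hcx.symm hxT (Set.disjoint_left.1 hCT hc)).trans
    ((hC.reachableAvoiding hCT hc hd).trans (.of_adj hdy (Set.disjoint_left.1 hCT hd) hyT))

lemma eq_nbhdClosed (hΩ : Cliquish G Ω) (hu : u ∈ Ω)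
    (h : ∀ C, IsCompAssoc G Ω C → u ∉ nbhd G C) : Ω = nbhdClosed G {u} := by
  refine Set.Subset.antisymm (fun w hw => ?_) ?_
  · obtain rfl | hwu := eq_or_ne w u
    · exact .inl rfl
    obtain hadj | ⟨C, hC, huC, -⟩ := hΩ u hu w hw hwu.symm
    · exact .inr ⟨hwu, u, rfl, hadj⟩
    · exact absurd huC (h C hC)
  · rintro w (rfl | ⟨-, _, rfl, hw⟩)
    · exact hu
    by_contra hwΩ
    exact h _ (isCompAssoc_componentOf hwΩ)
      ⟨fun h => notMem_of_mem_componentOf h hu, w, mem_componentOf_self hwΩ, hw.symm⟩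

end Cliquish

section Order

variable [Finite V] [LinearOrder V] {A A' B B' R U W K : Set V} {w : V}

lemma setMin_mem (hU : U.Nonempty) : setMin U hU ∈ U :=
  wellFounded_lt.min_mem U hU

lemma setMin_le_setMin (hUW : U ⊆ W) (hU : U.Nonempty) (hW : W.Nonempty) :
    setMin W hW ≤ setMin U hU :=
  wellFounded_lt.min_le (hUW (setMin_mem hU))

lemma SetPrec.mono (h : SetPrec A B) (hA : A ⊆ A') (hB : B' ⊆ B) (hB' : B'.Nonempty) :
    SetPrec A' B' := by
  obtain ⟨hAne, hBne, hlt⟩ := h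
  exact ⟨hAne.mono hA, hB', (setMin_le_setMin hA hAne _).trans_lt
    (hlt.trans_le (setMin_le_setMin hB hB' hBne))⟩

lemma SetPrec.irrefl : ¬ SetPrec A A := fun ⟨_, _, h⟩ => h.false

lemma Outbound.setPrec (hA : Outbound G A) (hR : IsFullComp G (nbhd G A) R)
    (hAR : Disjoint A R) : SetPrec A R := by
  have hAne : A.Nonempty := Set.nonempty_coe_sort.1 hA.1.nonempty
  have hRne : R.Nonempty := hR.1.nonempty
  refine ⟨hAne, hRne, lt_of_le_of_ne (not_lt.1 fun hlt => hA.2 ⟨R, hR, hRne, hAne, hlt⟩) ?_⟩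
  exact fun h => Set.disjoint_left.1 hAR (setMin_mem hAne) (h ▸ setMin_mem hRne)

def supportNbhd (G : SimpleGraph V) (K : Set V) : Set V :=
  ⋃ C ∈ support G K, nbhd G C

lemma nbhd_subset_supportNbhd (hC : C ∈ support G K) : nbhd G C ⊆ supportNbhd G K :=
  Set.subset_biUnion_of_mem (u := fun C => nbhd G C) hC

lemma supportNbhd_subset : supportNbhd G K ⊆ K :=
  Set.iUnion₂_subset fun _ hC => hC.1.2.2

lemma mem_support_of_mem_nbhd (hC : IsCompAssoc G K C) (hw : w ∈ nbhd G C)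
    (hwo : w ∉ outlet G K) : C ∈ support G K :=
  ⟨hC, fun h => hwo (h hw)⟩

lemma exists_eq_outlet (h : (outlet G K).Nonempty) :
    ∃ A, IsCompAssoc G K A ∧ nbhd G A ≠ K ∧ Outbound G A ∧ outlet G K = nbhd G A := by
  classical
  by_cases hA : ∃ A, IsCompAssoc G K A ∧ nbhd G A ≠ K ∧ Outbound G A ∧
      ∀ A', IsCompAssoc G K A' → nbhd G A' ≠ K → Outbound G A' → ¬ nbhd G A ⊂ nbhd G A'
  · obtain ⟨hA₁, hA₂, hA₃, -⟩ := hA.choose_spec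
    exact ⟨_, hA₁, hA₂, hA₃, by rw [outlet, dif_pos hA]⟩
  · rw [outlet, dif_neg hA] at h
    exact absurd h Set.not_nonempty_empty

lemma Cliquish.adj_of_notMem_supportNbhd (hΩ : Cliquish G Ω) (hx : x ∈ Ω)
    (hxW : x ∉ supportNbhd G Ω) (hw : w ∈ Ω) (hwo : w ∉ outlet G Ω) (hxw : x ≠ w) :
    G.Adj x w := by
  refine (hΩ x hx w hw hxw).resolve_right fun ⟨C, hC, hxC, hwC⟩ => hxW ?_
  exact nbhd_subset_supportNbhd (mem_support_of_mem_nbhd hC hwC hwo) hxC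

/-- The case of the proof in which `Ω` is built from an O-block; `A₀` is the component defining
the outlet. -/
structure OutletCase (G : SimpleGraph V) (Ω A₀ : Set V) : Prop where
  cliquish : Cliquish G Ω
  isCompAssoc : IsCompAssoc G Ω A₀
  nbhd_ne : nbhd G A₀ ≠ Ω
  outbound : Outbound G A₀
  outlet_eq : outlet G Ω = nbhd G A₀
  subset_union : Ω ⊆ supportNbhd G Ω ∪ nbhd G A₀

namespace OutletCase

variable {A₀ : Set V} {a : V}

lemma nbhd_subset (h : OutletCase G Ω A₀) : nbhd G A₀ ⊆ Ω :=
  h.isCompAssoc.2.2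

lemma adj (h : OutletCase G Ω A₀) (hx : x ∈ Ω) (hxW : x ∉ supportNbhd G Ω) (hw : w ∈ Ω)
    (hwo : w ∉ nbhd G A₀) : G.Adj x w :=
  h.cliquish.adj_of_notMem_supportNbhd hx hxW hw (h.outlet_eq ▸ hwo) fun hxw =>
    (h.subset_union hx).elim hxW fun hxo => hwo (hxw ▸ hxo)

lemma nbhd_componentOf (h : OutletCase G Ω A₀) (ha : a ∈ A₀) (hu : u ∈ Ω)
    (huW : u ∉ supportNbhd G Ω) (hT : T ⊆ supportNbhd G Ω) :
    nbhd G (componentOf G T a) = T := by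
  have hTΩ : T ⊆ Ω := hT.trans supportNbhd_subset
  have hA₀T := h.isCompAssoc.disjoint_of_subset hTΩ
  refine (isCompAssoc_componentOf (Set.disjoint_left.1 hA₀T ha)).nbhd_eq fun s hs => ?_
  by_cases hso : s ∈ nbhd G A₀
  · obtain ⟨-, b, hb, hbs⟩ := hso
    exact ⟨b, h.isCompAssoc.subset_componentOf hA₀T ha hb, hbs⟩
  · have huo : u ∈ nbhd G A₀ := (h.subset_union hu).resolve_left huW
    exact ⟨u, h.isCompAssoc.nbhd_diff_subset_componentOf hTΩ ha ⟨huo, fun huT => huW (hT huT)⟩,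
      h.adj hu huW (hTΩ hs) hso⟩

lemma disjoint_componentOf (h : OutletCase G Ω A₀) (ha : a ∈ A₀) (hC : C ∈ support G Ω) :
    Disjoint C (componentOf G (supportNbhd G Ω) a) := by
  refine Set.disjoint_left.2 fun x hxC hxA => ?_
  have hCW : IsCompAssoc G (supportNbhd G Ω) C :=
    ⟨hC.1.1, hC.1.disjoint_of_subset supportNbhd_subset, nbhd_subset_supportNbhd hC⟩
  have haC : a ∈ C := by
    rw [hCW.eq_componentOf hxC, ← componentOf_eq hxA]
    exact mem_componentOf_self (Set.disjoint_left.1 (h.isCompAssoc.disjoint_of_subset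
      supportNbhd_subset) ha)
  obtain rfl | hCA₀ := hC.1.eq_or_disjoint h.isCompAssoc
  · exact hC.2 h.outlet_eq.ge
  · exact Set.disjoint_left.1 hCA₀ haC ha

lemma eq_union (h : OutletCase G Ω A₀) (ha : a ∈ A₀) (hv : v ∈ Ω) (hvo : v ∉ nbhd G A₀) :
    Ω = supportNbhd G Ω ∪ (G.neighborSet v ∩ componentOf G (supportNbhd G Ω) a) := by
  refine Set.Subset.antisymm (fun w hw => ?_) (Set.union_subset supportNbhd_subset ?_)
  · by_cases hwW : w ∈ supportNbhd G Ω
    · exact .inl hwW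
    · have hwo := (h.subset_union hw).resolve_left hwW
      exact .inr ⟨(h.adj hw hwW hv hvo).symm,
        h.isCompAssoc.nbhd_diff_subset_componentOf supportNbhd_subset ha ⟨hwo, hwW⟩⟩
  · rintro x ⟨hvx, hxA⟩
    by_contra hxΩ
    have hC := isCompAssoc_componentOf (G := G) hxΩ
    have hvC : v ∈ nbhd G (componentOf G Ω x) :=
      ⟨fun h => notMem_of_mem_componentOf h hv, x, mem_componentOf_self hxΩ, (hvx : G.Adj v x).symm⟩
    exact Set.disjoint_left.1 (h.disjoint_componentOf ha
      (mem_support_of_mem_nbhd hC hvC (h.outlet_eq ▸ hvo))) (mem_componentOf_self hxΩ) hxA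

lemma support_subset_componentOf (h : OutletCase G Ω A₀) (hv : v ∈ Ω)
    (hvo : v ∉ nbhd G A₀) (hD : D ∈ support G Ω) : D ⊆ componentOf G (nbhd G A₀) v := by
  obtain ⟨w, hwD, hwo⟩ := Set.not_subset.1 hD.2
  rw [h.outlet_eq] at hwo
  have hDo := hD.1.disjoint_of_subset h.nbhd_subset
  have hvw := h.cliquish.reachableAvoiding h.nbhd_subset hv hvo (hD.1.2.2 hwD) hwo
  obtain ⟨-, d, hd, hdw⟩ := hwD
  rw [componentOf_eq (hvw.trans (.of_adj hdw.symm hwo (Set.disjoint_left.1 hDo hd)))]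
  exact hD.1.subset_componentOf hDo hd

lemma isFullComp_componentOf (h : OutletCase G Ω A₀) (hv : v ∈ Ω) (hvo : v ∉ nbhd G A₀) :
    IsFullComp G (nbhd G A₀) (componentOf G (nbhd G A₀) v) := by
  refine ⟨isCompAssoc_componentOf hvo, (isCompAssoc_componentOf hvo).nbhd_eq fun s hs => ?_⟩
  by_cases hsW : s ∈ supportNbhd G Ω
  · obtain ⟨D, hD, -, d, hd, hds⟩ := Set.mem_iUnion₂.1 hsW
    exact ⟨d, h.support_subset_componentOf hv hvo hD hd, hds⟩
  · exact ⟨v, mem_componentOf_self hvo, (h.adj (h.nbhd_subset hs) hsW hv hvo).symm⟩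

lemma setPrec_componentOf (h : OutletCase G Ω A₀) (hv : v ∈ Ω) (hvo : v ∉ nbhd G A₀) :
    SetPrec A₀ (componentOf G (nbhd G A₀) v) := by
  have hR := h.isFullComp_componentOf hv hvo
  refine h.outbound.setPrec hR (((isCompAssoc_nbhd h.outbound.1).eq_or_disjoint hR.1).resolve_left ?_)
  rintro hA₀R
  exact Set.disjoint_right.1 h.isCompAssoc.2.1 hv (hA₀R ▸ mem_componentOf_self hvo)

lemma outbound_componentOf (h : OutletCase G Ω A₀) (ha : a ∈ A₀) (hu : u ∈ Ω)
    (huW : u ∉ supportNbhd G Ω) (hv : v ∈ Ω) (hvo : v ∉ nbhd G A₀) :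
    Outbound G (componentOf G (supportNbhd G Ω) a) := by
  have hA₀W := h.isCompAssoc.disjoint_of_subset (supportNbhd_subset (G := G))
  have hA := isCompAssoc_componentOf (G := G) (Set.disjoint_left.1 hA₀W ha)
  refine ⟨hA.1, fun ⟨B, hB, hBA⟩ => ?_⟩
  rw [h.nbhd_componentOf ha hu huW subset_rfl] at hB
  have hBA' : Disjoint B (componentOf G (supportNbhd G Ω) a) :=
    (hB.1.eq_or_disjoint hA).resolve_left fun hBA_eq => SetPrec.irrefl (hBA_eq ▸ hBA)
  have hBo : Disjoint B (nbhd G A₀) := Set.disjoint_left.2 fun b hb hbo =>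
    Set.disjoint_left.1 hBA' hb (h.isCompAssoc.nbhd_diff_subset_componentOf supportNbhd_subset ha
      ⟨hbo, Set.disjoint_left.1 hB.1.2.1 hb⟩)
  obtain ⟨-, b, hb, hbv⟩ : v ∈ nbhd G B := hB.2 ▸ (h.subset_union hv).resolve_right hvo
  have hBR : B ⊆ componentOf G (nbhd G A₀) v := by
    rw [componentOf_eq (.of_adj hbv.symm hvo (Set.disjoint_left.1 hBo hb))]
    exact hB.1.subset_componentOf hBo hb
  exact h.outbound.2 ⟨_, h.isFullComp_componentOf hv hvo,
    hBA.mono hBR (h.isCompAssoc.subset_componentOf hA₀W ha) ⟨a, ha⟩⟩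

lemma inbound_of_mem_support (h : OutletCase G Ω A₀) (ha : a ∈ A₀) (hu : u ∈ Ω)
    (huW : u ∉ supportNbhd G Ω) (hv : v ∈ Ω) (hvo : v ∉ nbhd G A₀) (hC : C ∈ support G Ω) :
    Inbound G C := by
  have hA₀C := h.isCompAssoc.disjoint_of_subset hC.1.2.2
  refine ⟨hC.1.1, componentOf G (nbhd G C) a,
    ⟨isCompAssoc_componentOf (Set.disjoint_left.1 hA₀C ha),
      h.nbhd_componentOf ha hu huW (nbhd_subset_supportNbhd hC)⟩, ?_⟩
  exact (h.setPrec_componentOf hv hvo).mono (h.isCompAssoc.subset_componentOf hA₀C ha)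
    (h.support_subset_componentOf hv hvo hC) hC.1.nonempty

lemma exists_feasibleOBlock (h : OutletCase G Ω A₀) {k : ℕ} (hcard : Ω.ncard ≤ k + 1)
    (hfeas : ∀ C ∈ support G Ω, Feasible G k C) (hu : u ∈ Ω) (huW : u ∉ supportNbhd G Ω) :
    ∃ A, FeasibleOBlock G k A ∧ ∃ v ∈ nbhd G A, Ω = nbhd G A ∪ (G.neighborSet v ∩ A) := by
  obtain ⟨a, ha⟩ := h.isCompAssoc.nonempty
  obtain ⟨v, hv, hvo⟩ := Set.exists_of_ssubset (h.nbhd_subset.ssubset_of_ne h.nbhd_ne)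
  have hA := h.nbhd_componentOf ha hu huW subset_rfl
  have hW : (supportNbhd G Ω).ncard < Ω.ncard :=
    Set.ncard_lt_ncard (supportNbhd_subset.ssubset_of_ne fun hWΩ => huW (by rwa [hWΩ]))
  refine ⟨componentOf G (supportNbhd G Ω) a, ⟨h.outbound_componentOf ha hu huW hv hvo,
    by rw [hA]; omega, support G Ω, fun C hC => ⟨h.inbound_of_mem_support ha hu huW hv hvo hC, hfeas C hC⟩,
    hA⟩, v, ?_, ?_⟩
  · rw [hA]
    exact (h.subset_union hv).resolve_right hvo
  · rw [hA]
    exact h.eq_union ha hv hvo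

end OutletCase

end Order

theorem feasible_pmc_buildable_general {V : Type} [Finite V] [LinearOrder V] (G : SimpleGraph V)
    (k : ℕ) (Ω : Set V) (hΩ : PMC G Ω)
    (hcard : Ω.ncard ≤ k + 1) (hfeas : ∀ C ∈ support G Ω, Feasible G k C) :
    Buildable G k Ω := by
  have hcl := hΩ.cliquish
  refine ⟨hcard, ?_⟩
  by_cases hW : Ω ⊆ supportNbhd G Ω
  · exact .inr (.inl ⟨support G Ω, subset_rfl, hfeas, hW.antisymm supportNbhd_subset⟩)
  by_cases hcover : Ω ⊆ supportNbhd G Ω ∪ outlet G Ω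
  · obtain ⟨u, hu, huW⟩ := Set.not_subset.1 hW
    obtain ⟨A₀, hA₀, hne, hout, ho⟩ := exists_eq_outlet ⟨u, (hcover hu).resolve_left huW⟩
    have h : OutletCase G Ω A₀ := ⟨hcl, hA₀, hne, hout, ho, ho ▸ hcover⟩
    exact .inr (.inr (h.exists_feasibleOBlock hcard hfeas hu huW))
  · obtain ⟨u, hu, huWo⟩ := Set.not_subset.1 hcover
    refine .inl ⟨u, hcl.eq_nbhdClosed hu fun C hC huC => huWo (.inl ?_)⟩
    exact nbhd_subset_supportNbhd (mem_support_of_mem_nbhd hC huC fun huo => huWo (.inr huo)) huC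

/-- Every feasible potential maximal clique is buildable. -/
theorem feasible_pmc_buildable {V : Type} [Finite V] [LinearOrder V] (G : SimpleGraph V)
    (hG : G.Connected) (k : ℕ) (hk : 0 < k) (Ω : Set V) (hΩ : PMC G Ω)
    (hcard : Ω.ncard ≤ k + 1) (hfeas : ∀ C ∈ support G Ω, Feasible G k C) :
    Buildable G k Ω :=
  feasible_pmc_buildable_general G k Ω hΩ hcard hfeas

end TW
end
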